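/- Let G = (V,E) be a simple graph with n vertices and m edges, fix a bijection η : E → {1,…,m}, and let L be a k-assignment of G with k ≥ 2. Then P(G,L) − P(G,k) ≥ (1/k)·Σ_{e ∈ E} α(e)·Q_η(G,e,k). -/

import Mathlib

open Finset

variable {V : Type*}

/-- The number of proper colorings of `G` using the colors `{1, …, k}`. -/
noncomputable def propCol (G : SimpleGraph V) (k : ℕ) : ℕ :=
  Set.ncard {f : V → ℕ | (∀ v, f v ∈ Finset.Icc 1 k) ∧ ∀ ⦃a b : V⦄, G.Adj a b → f a ≠ f b}

/-- The number of `L`-colorings of `G`, for an assignment `L` of color lists. -/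
noncomputable def listCol (G : SimpleGraph V) (L : V → Finset ℕ) : ℕ :=
  Set.ncard {f : V → ℕ | (∀ v, f v ∈ L v) ∧ ∀ ⦃a b : V⦄, G.Adj a b → f a ≠ f b}

/-- `α(uv) = |L(u) \ L(v)|`, symmetrized (when `|L(u)| = |L(v)|` one has
`|L(u) \ L(v)| = |L(v) \ L(u)|`, so this is exactly `|L(u) \ L(v)|`). -/
noncomputable def alphaL (L : V → Finset ℕ) : Sym2 V → ℕ :=
  Sym2.lift ⟨fun a b => ((L a) \ (L b)).card ⊔ ((L b) \ (L a)).card,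
    fun a b => by simp [sup_comm]⟩

/-- `B` is the edge set of a broken cycle of `G` with respect to the edge ordering `η`:
the edge set of a path `v₁v₂⋯v_r` of `G` with `r ≥ 3` such that `v₁v_r ∈ E(G)` and
`η(v₁v_r) < η(v_iv_{i+1})` for each `i`. -/
def IsBrokenCycle [DecidableEq V] (G : SimpleGraph V) (η : Sym2 V → ℕ)
    (B : Finset (Sym2 V)) : Prop :=
  ∃ (u w : V) (p : G.Walk u w), p.IsPath ∧ 2 ≤ p.length ∧ G.Adj u w ∧
    (∀ f ∈ p.edges, η s(u, w) < η f) ∧ B = p.edges.toFinset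

/-- `NB_i(G)`: the collection of `i`-element subsets of `E(G)` containing no broken cycle. -/
def NBset [DecidableEq V] (G : SimpleGraph V) (η : Sym2 V → ℕ) (i : ℕ) :
    Set (Finset (Sym2 V)) :=
  {A : Finset (Sym2 V) | ↑A ⊆ G.edgeSet ∧ A.card = i ∧
    ∀ B : Finset (Sym2 V), IsBrokenCycle G η B → ¬ B ⊆ A}

/-- `|NB_i(G)|`. -/
noncomputable def NBcard [DecidableEq V] (G : SimpleGraph V) (η : Sym2 V → ℕ) (i : ℕ) : ℕ :=
  Set.ncard (NBset G η i)

/-- `|NB_i(G, e)|`: the number of `i`-element subsets of `E(G)` that contain `e`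
and contain no broken cycle. -/
noncomputable def NBe [DecidableEq V] (G : SimpleGraph V) (η : Sym2 V → ℕ)
    (i : ℕ) (e : Sym2 V) : ℕ :=
  Set.ncard {A : Finset (Sym2 V) | A ∈ NBset G η i ∧ e ∈ A}

/-- `Q_η(G, e, x)`, where `n` is the number of vertices of `G`. -/
noncomputable def Qeta [DecidableEq V] [Fintype V] (G : SimpleGraph V)
    (η : Sym2 V → ℕ) (e : Sym2 V) (x : ℝ) : ℝ :=
  (∑ i ∈ (Finset.Icc 1 (Fintype.card V - 1)).filter (fun i => Odd i),
      (NBe G η i e : ℝ) / i * x ^ (Fintype.card V - i)) -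
  ∑ i ∈ (Finset.Icc 2 (Fintype.card V - 1)).filter (fun i => Even i),
      (NBe G η i e : ℝ) * x ^ (Fintype.card V - i)

/-- The contraction `G/e` of the edge `e = uv`: the vertex `v` is merged into `u`
(so `v` becomes an isolated vertex), loops are removed and parallel edges are merged. -/
def contractE (G : SimpleGraph V) (u v : V) : SimpleGraph V :=
  SimpleGraph.fromRel (fun a b =>
    (G.Adj a b ∧ a ≠ v ∧ b ≠ v) ∨ (a = u ∧ b ≠ v ∧ G.Adj v b))

/-- The number of triangles (3-cliques) of `H`. -/
noncomputable def triangleCount (H : SimpleGraph V) : ℕ :=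
  Set.ncard {s : Finset V | H.IsNClique 3 s}

/-- `|NB₂(H)| = C(|E(H)|, 2) − △(H)`: the number of 2-element subsets of `E(H)`
containing no broken cycle (this count is independent of the edge ordering). -/
noncomputable def NB2 (H : SimpleGraph V) : ℕ :=
  Nat.choose (H.edgeSet.ncard) 2 - triangleCount H

/-- `C` is the edge set of a 4-cycle of `G`. -/
def IsFourCycle [DecidableEq V] (G : SimpleGraph V) (C : Finset (Sym2 V)) : Prop :=
  ∃ (u : V) (p : G.Walk u u), p.IsCycle ∧ p.length = 4 ∧ C = p.edges.toFinset

/-- The number of 4-cycles of `G` containing the edge `e`. -/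
noncomputable def fourCyclesOn [DecidableEq V] (G : SimpleGraph V) (e : Sym2 V) : ℕ :=
  Set.ncard {C : Finset (Sym2 V) | IsFourCycle G C ∧ e ∈ C}

/-- `c₄(G)`: the maximum over edges `e` of the number of 4-cycles of `G` containing `e`,
i.e. the least `r` such that every edge lies in at most `r` 4-cycles. -/
noncomputable def c4 [DecidableEq V] (G : SimpleGraph V) : ℕ :=
  sSup {r : ℕ | ∃ e ∈ G.edgeSet, r = fourCyclesOn G e}

/-- `β(T)` for the connected component `c` of `H`: the number of colors lying in every
list `L w` for `w` a vertex of the component `c`. -/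
noncomputable def betaComp (L : V → Finset ℕ) (H : SimpleGraph V)
    (c : H.ConnectedComponent) : ℕ :=
  Set.ncard {x : ℕ | ∀ w : V, H.connectedComponentMk w = c → x ∈ L w}

/-- `∏_j β(T_j)` over the connected components `T_j` of the spanning subgraph `H`. -/
noncomputable def betaProd (L : V → Finset ℕ) (H : SimpleGraph V) : ℕ :=
  ∏ᶠ c : H.ConnectedComponent, betaComp L H c


/-!
Inclusion–exclusion over edge sets gives `P(G, L) = ∑_{A ⊆ E} (-1)^|A| N_L(A)`, where
`N_L(A) = numConstOn L A` counts the maps `f v ∈ L v` that are constant on every edge of `A`.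
As in Whitney's broken-cycle theorem, toggling the `η`-least edge closing a broken cycle inside
`A` is a sign-reversing involution preserving `N_L`, so only sets `A` without broken cycles
survive. Such an `A` spans a forest with `n - |A|` components `T`, and `N_L(A) = ∏_T β(T)` with
`β(T) ≤ k`; for the constant assignment this is `k^(n - |A|)`. Two estimates compare the products:
* if `e ∈ A` then `β(T) ≤ k - α(e)` for the component `T` of `e`, so
  `α(e) k^(n-|A|) ≤ k (k^(n-|A|) - N_L(A))` (used for odd `|A|`);
* adding the edges of `A` one by one merges components and shows
  `∑_T (k - β(T)) ≤ ∑_{e ∈ A} α(e)`, whence `k (k^(n-|A|) - N_L(A)) ≤ k^(n-|A|) ∑_{e ∈ A} α(e)`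
  (used for even `|A|`).
Summing over `A` and grouping the sets by their size produces the polynomials `Q_η(G, e, k)`.
-/

namespace SimpleGraph

variable {G H : SimpleGraph V}

theorem Walk.exists_walk_edges_reroute {a b : V} (q : G.Walk a b) {x y : V} (p : G.Walk x y) :
    ∃ r : G.Walk x y, ∀ f ∈ r.edges, f ∈ q.edges ∨ (f ∈ p.edges ∧ f ≠ s(a, b)) := by
  induction p with
  | nil => exact ⟨nil, by simp⟩
  | @cons x z y h p ih =>
    obtain ⟨r, hr⟩ := ih
    by_cases he : s(x, z) = s(a, b)
    · have key : ∀ (q' : G.Walk x z), (∀ f ∈ q'.edges, f ∈ q.edges) →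
          ∃ r' : G.Walk x y, ∀ f ∈ r'.edges, f ∈ q.edges ∨ (f ∈ (cons h p).edges ∧ f ≠ s(a, b)) :=
        fun q' hq' => ⟨q'.append r, fun f hf => by
          rw [edges_append, List.mem_append] at hf
          rcases hf with hf | hf
          · exact Or.inl (hq' f hf)
          · exact (hr f hf).imp_right fun h' => ⟨List.mem_cons_of_mem _ h'.1, h'.2⟩⟩
      rcases Sym2.eq_iff.mp he with ⟨rfl, rfl⟩ | ⟨rfl, rfl⟩
      · exact key q fun f hf => hf
      · exact key q.reverse fun f hf => by simpa using hf
    · refine ⟨cons h r, fun f hf => ?_⟩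
      rw [edges_cons, List.mem_cons] at hf
      rcases hf with rfl | hf
      · exact Or.inr ⟨List.mem_cons_self, he⟩
      · exact (hr f hf).imp_right fun h' => ⟨List.mem_cons_of_mem _ h'.1, h'.2⟩

theorem Walk.IsCycle.exists_isPath_of_mem_edges {u a b : V} {c : G.Walk u u} (hc : c.IsCycle)
    (hab : s(a, b) ∈ c.edges) :
    ∃ p : G.Walk a b, p.IsPath ∧ ∀ f ∈ p.edges, f ∈ c.edges ∧ f ≠ s(a, b) := by
  classical
  -- in the graph formed by the edges of `c`, the edge `s(a, b)` lies on a cycle: not a bridge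
  set K := fromEdgeSet {f | f ∈ c.edges}
  have hK : ∀ f ∈ c.edges, f ∈ K.edgeSet := fun f hf => by
    simpa [K, edgeSet_fromEdgeSet] using
      ⟨hf, G.not_isDiag_of_mem_edgeSet (c.edges_subset_edgeSet hf)⟩
  obtain ⟨-, hreach⟩ := adj_and_reachable_delete_edges_iff_exists_cycle.mpr
    ⟨u, c.transfer K hK, hc.transfer hK, by rwa [edges_transfer]⟩
  obtain ⟨w, hw⟩ := reachable_deleteEdges_iff_exists_walk.mp hreach
  have hwc : ∀ f ∈ w.bypass.edges, f ∈ c.edges ∧ f ≠ s(a, b) := fun f hf => by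
    have hf' := w.edges_bypass_subset_edges hf
    have hfK := w.edges_subset_edgeSet hf'
    simp only [K, edgeSet_fromEdgeSet] at hfK
    exact ⟨hfK.1, fun h => hw (h ▸ hf')⟩
  have hG : ∀ f ∈ w.bypass.edges, f ∈ G.edgeSet := fun f hf =>
    c.edges_subset_edgeSet (hwc f hf).1
  exact ⟨w.bypass.transfer G hG, w.bypass_isPath.transfer hG, by rwa [edges_transfer]⟩

theorem Walk.apply_eq_of_forall_isDiag_map {α : Type*}
    {f : V → α} {u w : V} (p : G.Walk u w) (h : ∀ e ∈ p.edges, (e.map f).IsDiag) : f u = f w := by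
  induction p with
  | nil => rfl
  | cons hadj p ih =>
    simp only [Walk.edges_cons, List.mem_cons, forall_eq_or_imp, Sym2.map_mk,
      Sym2.mk_isDiag_iff] at h
    exact h.1.trans (ih h.2)

variable {u v : V}

theorem reachable_sup_edge_iff {x y : V} :
    (H ⊔ edge u v).Reachable x y ↔ H.Reachable x y ∨ (H.Reachable x u ∧ H.Reachable v y) ∨
      (H.Reachable x v ∧ H.Reachable u y) := by
  constructor
  · rintro ⟨p⟩
    induction p with
    | nil => exact Or.inl .rfl
    | @cons a c y h p ih =>
      rcases (sup_adj _ _ _ _).mp h with h | h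
      · rcases ih with h' | ⟨h1, h2⟩ | ⟨h1, h2⟩
        exacts [Or.inl (h.reachable.trans h'), Or.inr (Or.inl ⟨h.reachable.trans h1, h2⟩),
          Or.inr (Or.inr ⟨h.reachable.trans h1, h2⟩)]
      · rcases (edge_adj ..).mp h with ⟨⟨rfl, rfl⟩ | ⟨rfl, rfl⟩, -⟩
        · rcases ih with h' | ⟨-, h2⟩ | ⟨-, h2⟩
          exacts [Or.inr (Or.inl ⟨.rfl, h'⟩), Or.inr (Or.inl ⟨.rfl, h2⟩), Or.inl h2]
        · rcases ih with h' | ⟨-, h2⟩ | ⟨-, h2⟩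
          exacts [Or.inr (Or.inr ⟨.rfl, h'⟩), Or.inl h2, Or.inr (Or.inr ⟨.rfl, h2⟩)]
  · have hle : H ≤ H ⊔ edge u v := le_sup_left
    have huv : (H ⊔ edge u v).Reachable u v := by
      by_cases h : u = v
      · exact h ▸ .rfl
      · exact (Adj.reachable (by simp [edge_adj, h]))
    rintro (h | ⟨h1, h2⟩ | ⟨h1, h2⟩)
    · exact h.mono hle
    · exact ((h1.mono hle).trans huv).trans (h2.mono hle)
    · exact ((h1.mono hle).trans huv.symm).trans (h2.mono hle)

theorem reachable_sup_edge_iff_of_not_reachable {x y : V} (hu : ¬H.Reachable x u)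
    (hv : ¬H.Reachable x v) : (H ⊔ edge u v).Reachable x y ↔ H.Reachable x y := by
  simp [reachable_sup_edge_iff, hu, hv]

theorem supp_sup_edge_connectedComponentMk_left :
    ((H ⊔ edge u v).connectedComponentMk u).supp =
      (H.connectedComponentMk u).supp ∪ (H.connectedComponentMk v).supp := by
  ext w
  simp only [ConnectedComponent.mem_supp_iff, ConnectedComponent.eq, Set.mem_union,
    reachable_sup_edge_iff]
  tauto

theorem supp_sup_edge_connectedComponentMk_of_not_reachable {x : V} (hu : ¬H.Reachable x u)
    (hv : ¬H.Reachable x v) :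
    ((H ⊔ edge u v).connectedComponentMk x).supp = (H.connectedComponentMk x).supp := by
  ext w
  simp only [ConnectedComponent.mem_supp_iff, ConnectedComponent.eq]
  rw [reachable_comm, reachable_sup_edge_iff_of_not_reachable hu hv, reachable_comm]

/- The next lemmas take `H'` with `H' = H ⊔ edge u v` rather than `H ⊔ edge u v` itself, so that
the `Fintype` instance on `H'.ConnectedComponent` is the one of the caller's graph
(e.g. `spanningGraph (insert e A)`). -/

open scoped Classical in
theorem sum_supp_erase_sup_edge [Fintype V] [DecidableEq V] {M : Type*} [AddCommMonoid M]
    (F : Set V → M) {H' : SimpleGraph V} (hH' : H' = H ⊔ edge u v) :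
    ∑ c ∈ (univ.erase (H.connectedComponentMk u)).erase (H.connectedComponentMk v), F c.supp =
      ∑ c ∈ univ.erase (H'.connectedComponentMk u), F c.supp := by
  have hle : H ≤ H' := hH' ▸ le_sup_left
  have hreach : ∀ {x y}, ¬H.Reachable x u → ¬H.Reachable x v →
      (H'.Reachable x y ↔ H.Reachable x y) :=
    fun hu hv => hH' ▸ reachable_sup_edge_iff_of_not_reachable hu hv
  have hfar : ∀ c ∈ ((univ : Finset H.ConnectedComponent).erase (H.connectedComponentMk u)).erase
      (H.connectedComponentMk v), ∃ x, c = H.connectedComponentMk x ∧ ¬H.Reachable x u ∧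
        ¬H.Reachable x v := by
    intro c hc
    induction c using ConnectedComponent.ind with | h x => ?_
    simp only [mem_erase, mem_univ, and_true, ne_eq] at hc
    exact ⟨x, rfl, fun h => hc.2 (ConnectedComponent.sound h),
      fun h => hc.1 (ConnectedComponent.sound h)⟩
  have hmap : ∀ x, (H.connectedComponentMk x).map (Hom.ofLE hle) = H'.connectedComponentMk x :=
    fun _ => rfl
  refine sum_nbij (ConnectedComponent.map (Hom.ofLE hle)) (fun c hc => ?_)
    (fun c hc c' hc' h => ?_) (fun c' hc' => ?_) (fun c hc => ?_)
  · obtain ⟨x, rfl, hu, hv⟩ := hfar c hc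
    rw [hmap, mem_erase, ne_eq, ConnectedComponent.eq, hreach hu hv]
    exact ⟨hu, mem_univ _⟩
  · obtain ⟨x, rfl, hu, hv⟩ := hfar c hc
    obtain ⟨x', rfl, -, -⟩ := hfar c' hc'
    simp only [hmap, ConnectedComponent.eq] at h ⊢
    exact (hreach hu hv).mp h
  · induction c' using ConnectedComponent.ind with | h x => ?_
    have hxu : ¬H'.Reachable x u := fun h =>
      (mem_erase.mp (mem_coe.mp hc')).1 (ConnectedComponent.sound h)
    refine ⟨H.connectedComponentMk x, ?_, hmap x⟩
    simp only [coe_erase, coe_univ, Set.mem_sdiff, Set.mem_univ, Set.mem_singleton_iff,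
      true_and, ConnectedComponent.eq]
    exact ⟨fun h => hxu (h.mono hle),
      fun h => hxu (hH' ▸ reachable_sup_edge_iff.mpr (Or.inr (Or.inr ⟨h, .rfl⟩)))⟩
  · obtain ⟨x, rfl, hu, hv⟩ := hfar c hc
    rw [hmap, hH', supp_sup_edge_connectedComponentMk_of_not_reachable hu hv]

open scoped Classical in
theorem sum_supp_sup_edge [Fintype V] [DecidableEq V] {M : Type*} [AddCommMonoid M]
    (F : Set V → M) {H' : SimpleGraph V} (hH' : H' = H ⊔ edge u v) (huv : ¬H.Reachable u v) :
    ∑ c : H.ConnectedComponent, F c.supp + F (H'.connectedComponentMk u).supp =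
      ∑ c : H'.ConnectedComponent, F c.supp +
        F (H.connectedComponentMk u).supp + F (H.connectedComponentMk v).supp := by
  have hne : H.connectedComponentMk v ≠ H.connectedComponentMk u := by
    simpa [reachable_comm] using huv
  rw [← add_sum_erase _ _ (mem_univ (H.connectedComponentMk u)),
    ← add_sum_erase _ _ (mem_erase.mpr ⟨hne, mem_univ _⟩),
    ← add_sum_erase _ _ (mem_univ (H'.connectedComponentMk u)), sum_supp_erase_sup_edge F hH']
  abel

end SimpleGraph

open SimpleGraph

section InclusionExclusion

variable [Fintype V] [DecidableEq V]

noncomputable def numConstOn (L : V → Finset ℕ) (A : Finset (Sym2 V)) : ℕ :=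
  #{f ∈ Fintype.piFinset L | ∀ e ∈ A, (e.map f).IsDiag}

theorem listCol_eq_card (G : SimpleGraph V) [DecidableRel G.Adj] (L : V → Finset ℕ) :
    listCol G L = #{f ∈ Fintype.piFinset L | ∀ e ∈ G.edgeFinset, ¬(e.map f).IsDiag} := by
  rw [listCol, ← Set.ncard_coe_finset]
  congr 1
  ext f
  simp only [coe_filter, Fintype.mem_piFinset, Sym2.forall, mem_edgeFinset,
    mem_edgeSet, Sym2.map_mk, Sym2.mk_isDiag_iff]

theorem sum_powerset_neg_one_pow_card_filter_isDiag (E : Finset (Sym2 V)) (f : V → ℕ) :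
    ∑ A ∈ E.powerset, (if ∀ e ∈ A, (e.map f).IsDiag then (-1 : ℤ) ^ #A else 0) =
      if ∀ e ∈ E, ¬(e.map f).IsDiag then 1 else 0 := by
  have hpow : {A ∈ E.powerset | ∀ e ∈ A, (e.map f).IsDiag} =
      {e ∈ E | (e.map f).IsDiag}.powerset := by
    ext A
    simp only [mem_filter, mem_powerset, subset_iff]
    exact ⟨fun h _ he => ⟨h.1 he, h.2 _ he⟩, fun h => ⟨fun _ he => (h he).1, fun _ he => (h he).2⟩⟩
  rw [← sum_filter, hpow, sum_powerset_neg_one_pow_card]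
  exact if_congr filter_eq_empty_iff rfl rfl

theorem listCol_eq_sum_powerset (G : SimpleGraph V) [DecidableRel G.Adj] (L : V → Finset ℕ) :
    (listCol G L : ℤ) = ∑ A ∈ G.edgeFinset.powerset, (-1) ^ #A * (numConstOn L A : ℤ) := by
  calc (listCol G L : ℤ)
      = ∑ f ∈ Fintype.piFinset L, if ∀ e ∈ G.edgeFinset, ¬(e.map f).IsDiag then 1 else 0 := by
        rw [listCol_eq_card, sum_boole]
    _ = ∑ f ∈ Fintype.piFinset L, ∑ A ∈ G.edgeFinset.powerset,
          if ∀ e ∈ A, (e.map f).IsDiag then (-1) ^ #A else 0 := by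
        simp only [sum_powerset_neg_one_pow_card_filter_isDiag]
    _ = ∑ A ∈ G.edgeFinset.powerset, (-1) ^ #A * (numConstOn L A : ℤ) := by
        rw [sum_comm]
        refine sum_congr rfl fun A _ => ?_
        rw [← sum_filter, sum_const, numConstOn, nsmul_eq_mul, mul_comm]

end InclusionExclusion

section BrokenCycles

variable [DecidableEq V] {G : SimpleGraph V} {η : Sym2 V → ℕ}

def IsBrokenCycleClosedBy (G : SimpleGraph V) (η : Sym2 V → ℕ) (e : Sym2 V)
    (B : Finset (Sym2 V)) : Prop :=
  ∃ (u w : V) (p : G.Walk u w), p.IsPath ∧ G.Adj u w ∧ (∀ f ∈ p.edges, η s(u, w) < η f) ∧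
    e = s(u, w) ∧ B = p.edges.toFinset

theorem isBrokenCycle_iff_exists_isBrokenCycleClosedBy {B : Finset (Sym2 V)} :
    IsBrokenCycle G η B ↔ ∃ e, IsBrokenCycleClosedBy G η e B := by
  constructor
  · rintro ⟨u, w, p, hp, -, hadj, hη, rfl⟩
    exact ⟨_, u, w, p, hp, hadj, hη, rfl, rfl⟩
  · rintro ⟨_, u, w, p, hp, hadj, hη, -, rfl⟩
    refine ⟨u, w, p, hp, ?_, hadj, hη, rfl⟩
    cases p with
    | nil => exact absurd rfl hadj.ne
    | cons h q =>
      cases q with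
      | nil => exact absurd (hη _ (by simp)) (lt_irrefl _)
      | cons _ _ => simp

namespace IsBrokenCycleClosedBy

variable {e : Sym2 V} {B : Finset (Sym2 V)}

theorem mem_edgeSet (h : IsBrokenCycleClosedBy G η e B) : e ∈ G.edgeSet := by
  obtain ⟨u, w, p, -, hadj, -, rfl, -⟩ := h
  exact hadj

theorem lt (h : IsBrokenCycleClosedBy G η e B) : ∀ f ∈ B, η e < η f := by
  obtain ⟨u, w, p, -, -, hη, rfl, rfl⟩ := h
  exact fun f hf => hη f (List.mem_toFinset.mp hf)

theorem notMem (h : IsBrokenCycleClosedBy G η e B) : e ∉ B :=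
  fun he => lt_irrefl _ (h.lt e he)

theorem isDiag_map {f : V → ℕ} (h : IsBrokenCycleClosedBy G η e B)
    (hf : ∀ b ∈ B, (b.map f).IsDiag) : (e.map f).IsDiag := by
  obtain ⟨u, w, p, -, -, -, rfl, rfl⟩ := h
  exact Sym2.mk_isDiag_iff.mpr
    (p.apply_eq_of_forall_isDiag_map fun b hb => hf b (List.mem_toFinset.mpr hb))

/-- The exchange step of Whitney's cancellation: a broken cycle through the closing edge `e₀`
of `B₀` is rerouted along `B₀`. -/
theorem exists_subset_of_subset_insert {e₀ : Sym2 V} {A B₀ : Finset (Sym2 V)}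
    (h₀ : IsBrokenCycleClosedBy G η e₀ B₀) (hB₀ : B₀ ⊆ A) (h : IsBrokenCycleClosedBy G η e B)
    (hB : B ⊆ insert e₀ A) (hlt : η e < η e₀) : ∃ B' ⊆ A, IsBrokenCycleClosedBy G η e B' := by
  obtain ⟨u₀, w₀, p₀, -, -, hη₀, rfl, rfl⟩ := h₀
  obtain ⟨u, w, p, -, hadj, hη, rfl, rfl⟩ := h
  obtain ⟨r, hr⟩ := p₀.exists_walk_edges_reroute p
  have hr' : ∀ f ∈ r.bypass.edges, f ∈ p₀.edges ∨ (f ∈ p.edges ∧ f ≠ s(u₀, w₀)) :=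
    fun f hf => hr f (r.edges_bypass_subset_edges hf)
  refine ⟨r.bypass.edges.toFinset, fun f hf => ?_,
    u, w, r.bypass, r.bypass_isPath, hadj, fun f hf => ?_, rfl, rfl⟩
  · rcases hr' f (List.mem_toFinset.mp hf) with hf | ⟨hf, hne⟩
    · exact hB₀ (List.mem_toFinset.mpr hf)
    · exact (mem_insert.mp (hB (List.mem_toFinset.mpr hf))).resolve_left hne
  · rcases hr' f hf with hf | ⟨hf, -⟩
    · exact hlt.trans (hη₀ f hf)
    · exact hη f hf

end IsBrokenCycleClosedBy

end BrokenCycles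

section Toggle

variable {α : Type*} [DecidableEq α] {A : Finset α} {e : α}

def toggleElem (A : Finset α) (e : α) : Finset α :=
  if e ∈ A then A.erase e else insert e A

theorem erase_subset_toggleElem : A.erase e ⊆ toggleElem A e := by
  unfold toggleElem; split_ifs
  exacts [subset_rfl, (erase_subset _ _).trans (subset_insert _ _)]

theorem toggleElem_subset_insert : toggleElem A e ⊆ insert e A := by
  unfold toggleElem; split_ifs
  exacts [(erase_subset _ _).trans (subset_insert _ _), subset_rfl]

theorem toggleElem_toggleElem : toggleElem (toggleElem A e) e = A := by
  unfold toggleElem; split_ifs <;> simp_all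

theorem toggleElem_ne : toggleElem A e ≠ A := by
  unfold toggleElem; split_ifs with h
  exacts [erase_ne_self.mpr h, insert_ne_self.mpr h]

theorem neg_one_pow_card_toggleElem : (-1 : ℤ) ^ #(toggleElem A e) = -(-1) ^ #A := by
  unfold toggleElem; split_ifs with h
  · rw [← card_erase_add_one h, pow_succ]; ring
  · rw [card_insert_of_notMem h, pow_succ]; ring

end Toggle

section Cancellation

variable [Fintype V] [DecidableEq V] {G : SimpleGraph V} {η : Sym2 V → ℕ}

def ContainsBrokenCycle (G : SimpleGraph V) (η : Sym2 V → ℕ) (A : Finset (Sym2 V)) : Prop :=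
  ∃ B ⊆ A, IsBrokenCycle G η B

open scoped Classical in
noncomputable def closingEdges (G : SimpleGraph V) (η : Sym2 V → ℕ) (A : Finset (Sym2 V)) :
    Finset (Sym2 V) :=
  {e | ∃ B ⊆ A, IsBrokenCycleClosedBy G η e B}

theorem mem_closingEdges {A : Finset (Sym2 V)} {e : Sym2 V} :
    e ∈ closingEdges G η A ↔ ∃ B ⊆ A, IsBrokenCycleClosedBy G η e B := by
  simp [closingEdges]

theorem containsBrokenCycle_iff_closingEdges_nonempty {A : Finset (Sym2 V)} :
    ContainsBrokenCycle G η A ↔ (closingEdges G η A).Nonempty := by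
  simp only [ContainsBrokenCycle, isBrokenCycle_iff_exists_isBrokenCycleClosedBy,
    Finset.Nonempty, mem_closingEdges]
  tauto

noncomputable def minClosingEdge (G : SimpleGraph V) (η : Sym2 V → ℕ) (A : Finset (Sym2 V))
    (h : (closingEdges G η A).Nonempty) : Sym2 V :=
  (exists_min_image _ η h).choose

theorem minClosingEdge_mem {A : Finset (Sym2 V)} (h : (closingEdges G η A).Nonempty) :
    minClosingEdge G η A h ∈ closingEdges G η A :=
  (exists_min_image _ η h).choose_spec.1

theorem minClosingEdge_le {A : Finset (Sym2 V)} (h : (closingEdges G η A).Nonempty) :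
    ∀ f ∈ closingEdges G η A, η (minClosingEdge G η A h) ≤ η f :=
  (exists_min_image _ η h).choose_spec.2

theorem minClosingEdge_eq (hinj : Set.InjOn η G.edgeSet) {A : Finset (Sym2 V)}
    (h : (closingEdges G η A).Nonempty) {e : Sym2 V} (he : e ∈ closingEdges G η A)
    (hmin : ∀ f ∈ closingEdges G η A, η e ≤ η f) : minClosingEdge G η A h = e := by
  have hG : ∀ {f}, f ∈ closingEdges G η A → f ∈ G.edgeSet := fun hf => by
    obtain ⟨B, -, hB⟩ := mem_closingEdges.mp hf
    exact hB.mem_edgeSet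
  exact hinj (hG (minClosingEdge_mem h)) (hG he)
    (le_antisymm (minClosingEdge_le h e he) (hmin _ (minClosingEdge_mem h)))

theorem minClosingEdge_eq_of_subset (hinj : Set.InjOn η G.edgeSet) {A A' : Finset (Sym2 V)}
    (h : (closingEdges G η A).Nonempty) (h₁ : A.erase (minClosingEdge G η A h) ⊆ A')
    (h₂ : A' ⊆ insert (minClosingEdge G η A h) A) :
    ∃ h' : (closingEdges G η A').Nonempty, minClosingEdge G η A' h' = minClosingEdge G η A h := by
  set e₀ := minClosingEdge G η A h
  obtain ⟨B₀, hB₀, h₀⟩ := mem_closingEdges.mp (minClosingEdge_mem h)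
  have he₀ : e₀ ∈ closingEdges G η A' :=
    mem_closingEdges.mpr ⟨B₀, fun f hf => h₁ (mem_erase.mpr ⟨fun hfe => h₀.notMem (hfe ▸ hf :),
      hB₀ hf⟩), h₀⟩
  refine ⟨⟨e₀, he₀⟩, minClosingEdge_eq hinj _ he₀ fun f hf => ?_⟩
  by_contra! hlt
  obtain ⟨B, hB, hf'⟩ := mem_closingEdges.mp hf
  obtain ⟨B', hB', hfB'⟩ := h₀.exists_subset_of_subset_insert hB₀ hf' (hB.trans h₂) hlt
  exact (minClosingEdge_le h f (mem_closingEdges.mpr ⟨B', hB', hfB'⟩)).not_gt hlt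

theorem numConstOn_eq_of_subset_insert (L : V → Finset ℕ) {e : Sym2 V}
    {B A₁ A₂ : Finset (Sym2 V)} (h : IsBrokenCycleClosedBy G η e B) (hB : B ⊆ A₁)
    (h₁ : A₁ ⊆ A₂) (h₂ : A₂ ⊆ insert e A₁) : numConstOn L A₂ = numConstOn L A₁ := by
  refine congrArg card (filter_congr fun f _ => ⟨fun hf x hx => hf x (h₁ hx), fun hf x hx => ?_⟩)
  rcases mem_insert.mp (h₂ hx) with rfl | hx
  exacts [h.isDiag_map fun b hb => hf b (hB hb), hf x hx]

theorem numConstOn_toggleElem_minClosingEdge (L : V → Finset ℕ) {A : Finset (Sym2 V)}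
    (h : (closingEdges G η A).Nonempty) :
    numConstOn L (toggleElem A (minClosingEdge G η A h)) = numConstOn L A := by
  obtain ⟨B, hB, hBe⟩ := mem_closingEdges.mp (minClosingEdge_mem h)
  have hB' : B ⊆ A.erase (minClosingEdge G η A h) := fun f hf =>
    mem_erase.mpr ⟨fun hfe => hBe.notMem (hfe ▸ hf :), hB hf⟩
  have hA : insert (minClosingEdge G η A h) A ⊆
      insert (minClosingEdge G η A h) (A.erase (minClosingEdge G η A h)) :=
    insert_subset_iff.mpr ⟨mem_insert_self _ _, insert_erase_subset _ _⟩
  rw [numConstOn_eq_of_subset_insert L hBe hB' erase_subset_toggleElem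
      (toggleElem_subset_insert.trans hA),
    numConstOn_eq_of_subset_insert L hBe hB' (erase_subset _ _) (insert_erase_subset _ _)]

open scoped Classical in
theorem sum_containsBrokenCycle_eq_zero [DecidableRel G.Adj] (hinj : Set.InjOn η G.edgeSet)
    (L : V → Finset ℕ) :
    ∑ A ∈ G.edgeFinset.powerset with ContainsBrokenCycle G η A,
      (-1 : ℤ) ^ #A * numConstOn L A = 0 := by
  have hne : ∀ A ∈ {A ∈ G.edgeFinset.powerset | ContainsBrokenCycle G η A},
      (closingEdges G η A).Nonempty := fun A hA =>
    containsBrokenCycle_iff_closingEdges_nonempty.mp (mem_filter.mp hA).2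
  have hstable : ∀ A hA, ∃ h',
      minClosingEdge G η (toggleElem A (minClosingEdge G η A (hne A hA))) h' =
        minClosingEdge G η A (hne A hA) := fun A hA =>
    minClosingEdge_eq_of_subset hinj _ erase_subset_toggleElem toggleElem_subset_insert
  refine sum_involution (fun A hA => toggleElem A (minClosingEdge G η A (hne A hA)))
    (fun A hA => ?_) (fun A hA _ => toggleElem_ne) (fun A hA => ?_) (fun A hA => ?_)
  · rw [numConstOn_toggleElem_minClosingEdge, neg_one_pow_card_toggleElem]
    ring
  · obtain ⟨h', -⟩ := hstable A hA
    obtain ⟨B, -, hB⟩ := mem_closingEdges.mp (minClosingEdge_mem (hne A hA))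
    refine mem_filter.mpr ⟨mem_powerset.mpr (toggleElem_subset_insert.trans
      (insert_subset ?_ (mem_powerset.mp (mem_filter.mp hA).1))),
      containsBrokenCycle_iff_closingEdges_nonempty.mpr h'⟩
    exact mem_edgeFinset.mpr hB.mem_edgeSet
  · obtain ⟨h', heq⟩ := hstable A hA
    simp only [heq, toggleElem_toggleElem]

end Cancellation

section SpanningGraph

def spanningGraph (A : Finset (Sym2 V)) : SimpleGraph V := fromEdgeSet A

variable {A : Finset (Sym2 V)}

theorem spanningGraph_adj {u v : V} : (spanningGraph A).Adj u v ↔ s(u, v) ∈ A ∧ u ≠ v :=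
  fromEdgeSet_adj _

theorem mem_of_mem_edgeSet_spanningGraph {e : Sym2 V} (he : e ∈ (spanningGraph A).edgeSet) :
    e ∈ A := by
  rw [spanningGraph, edgeSet_fromEdgeSet] at he
  exact he.1

theorem spanningGraph_empty : spanningGraph (∅ : Finset (Sym2 V)) = ⊥ := by
  rw [spanningGraph, coe_empty, fromEdgeSet_empty]

theorem spanningGraph_insert [DecidableEq V] (u v : V) :
    spanningGraph (insert s(u, v) A) = spanningGraph A ⊔ edge u v := by
  rw [spanningGraph, spanningGraph, edge, ← fromEdgeSet_union, coe_insert, Set.union_singleton]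

end SpanningGraph

section NoBrokenCycleSets

variable [Fintype V] [DecidableEq V] {G : SimpleGraph V} [DecidableRel G.Adj] {η : Sym2 V → ℕ}

open scoped Classical in
noncomputable def noBrokenCycleSets (G : SimpleGraph V) [DecidableRel G.Adj]
    (η : Sym2 V → ℕ) : Finset (Finset (Sym2 V)) :=
  {A ∈ G.edgeFinset.powerset | ¬ContainsBrokenCycle G η A}

theorem mem_noBrokenCycleSets {A : Finset (Sym2 V)} :
    A ∈ noBrokenCycleSets G η ↔ A ⊆ G.edgeFinset ∧ ¬ContainsBrokenCycle G η A := by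
  simp [noBrokenCycleSets]

/-- Whitney's broken-cycle theorem, for list colorings. -/
theorem listCol_eq_sum_noBrokenCycleSets (hinj : Set.InjOn η G.edgeSet) (L : V → Finset ℕ) :
    (listCol G L : ℤ) = ∑ A ∈ noBrokenCycleSets G η, (-1) ^ #A * (numConstOn L A : ℤ) := by
  classical
  rw [listCol_eq_sum_powerset, ← sum_filter_add_sum_filter_not _ (ContainsBrokenCycle G η),
    sum_containsBrokenCycle_eq_zero hinj, zero_add, noBrokenCycleSets]

theorem isAcyclic_spanningGraph (hinj : Set.InjOn η G.edgeSet) {A : Finset (Sym2 V)}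
    (hA : A ∈ noBrokenCycleSets G η) : (spanningGraph A).IsAcyclic := by
  obtain ⟨hAG, hnb⟩ := mem_noBrokenCycleSets.mp hA
  intro u c hc
  have hcA : ∀ f ∈ c.edges, f ∈ A := fun f hf =>
    mem_of_mem_edgeSet_spanningGraph (c.edges_subset_edgeSet hf)
  have hcG : ∀ f ∈ c.edges, f ∈ G.edgeSet := fun f hf => mem_edgeFinset.mp (hAG (hcA f hf))
  set c' := c.transfer G hcG
  have hc'A : ∀ f ∈ c'.edges, f ∈ A := by simpa [c', Walk.edges_transfer] using hcA
  have hc'G : ∀ f ∈ c'.edges, f ∈ G.edgeSet := by simpa [c', Walk.edges_transfer] using hcG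
  obtain ⟨e, he, hmin⟩ := exists_min_image c'.edges.toFinset η
    (List.toFinset_nonempty_iff _ |>.mpr (Walk.edges_eq_nil.not.mpr (hc.transfer hcG).not_nil))
  rw [List.mem_toFinset] at he
  induction e using Sym2.ind with | _ a b => ?_
  obtain ⟨p, hp, hpc⟩ := (hc.transfer hcG).exists_isPath_of_mem_edges he
  refine hnb ⟨p.edges.toFinset, fun f hf => hc'A f (hpc f (List.mem_toFinset.mp hf)).1,
    isBrokenCycle_iff_exists_isBrokenCycleClosedBy.mpr
      ⟨_, a, b, p, hp, c'.adj_of_mem_edges he, fun f hf => ?_, rfl, rfl⟩⟩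
  obtain ⟨hfc, hne⟩ := hpc f hf
  exact (hmin f (List.mem_toFinset.mpr hfc)).lt_of_ne
    fun h => hne (hinj (hc'G f hfc) (hc'G _ he) h.symm)

end NoBrokenCycleSets

section Alpha

variable {L : V → Finset ℕ} {k : ℕ}

theorem card_inter_add_alphaL (hL : ∀ v, #(L v) = k) (u v : V) :
    #(L u ∩ L v) + alphaL L s(u, v) = k := by
  have hu := card_sdiff_add_card_inter (L u) (L v)
  have hv := card_sdiff_add_card_inter (L v) (L u)
  rw [inter_comm, hL] at hv
  rw [hL] at hu
  simp only [alphaL, Sym2.lift_mk]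
  omega

theorem card_union_eq_add_alphaL (hL : ∀ v, #(L v) = k) (u v : V) :
    #(L u ∪ L v) = k + alphaL L s(u, v) := by
  have := card_union_add_card_inter (L u) (L v)
  have := card_inter_add_alphaL hL u v
  rw [hL, hL] at *
  omega

end Alpha

section CommonColors

variable (L : V → Finset ℕ)

open scoped Classical in
/-- For a connected component `T`, `#(commonColors L T.supp)` is the paper's `β(T)`
(`betaComp`). -/
noncomputable def commonColors [Fintype V] (S : Set V) : Finset ℕ :=
  {x ∈ univ.biUnion L | ∀ v ∈ S, x ∈ L v}

variable [Fintype V] {L} {k : ℕ}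

theorem mem_commonColors {S : Set V} (hS : S.Nonempty) {x : ℕ} :
    x ∈ commonColors L S ↔ ∀ v ∈ S, x ∈ L v := by
  obtain ⟨w, hw⟩ := hS
  simp only [commonColors, mem_filter, mem_biUnion, mem_univ, true_and, and_iff_right_iff_imp]
  exact fun h => ⟨w, h w hw⟩

theorem commonColors_subset {S : Set V} {v : V} (hv : v ∈ S) : commonColors L S ⊆ L v :=
  fun _ hx => (mem_commonColors ⟨v, hv⟩).mp hx v hv

theorem commonColors_union (S T : Set V) :
    commonColors L (S ∪ T) = commonColors L S ∩ commonColors L T := by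
  ext x
  simp only [commonColors, mem_filter, mem_inter, Set.mem_union]
  grind

theorem commonColors_singleton (v : V) : commonColors L {v} = L v := by
  ext x
  simp [mem_commonColors (Set.singleton_nonempty v)]

theorem commonColors_const {S : Set V} (hS : S.Nonempty) (K : Finset ℕ) :
    commonColors (fun _ => K) S = K := by
  ext x
  obtain ⟨w, hw⟩ := hS
  simp only [mem_commonColors ⟨w, hw⟩]
  exact ⟨fun h => h w hw, fun h _ _ => h⟩

theorem card_commonColors_le (hL : ∀ v, #(L v) = k) {S : Set V} {v : V} (hv : v ∈ S) :
    #(commonColors L S) ≤ k :=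
  (card_le_card (commonColors_subset hv)).trans_eq (hL v)

theorem card_commonColors_add_alphaL_le (hL : ∀ v, #(L v) = k) {S : Set V} {u v : V}
    (hu : u ∈ S) (hv : v ∈ S) : #(commonColors L S) + alphaL L s(u, v) ≤ k := by
  have := card_le_card (subset_inter (commonColors_subset (L := L) hu)
    (commonColors_subset (L := L) hv))
  have := card_inter_add_alphaL hL u v
  omega

open scoped Classical in
theorem numConstOn_eq_prod [DecidableEq V] (L : V → Finset ℕ) (A : Finset (Sym2 V)) :
    numConstOn L A = ∏ c : (spanningGraph A).ConnectedComponent,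
      #(commonColors L c.supp) := by
  set H := spanningGraph A
  have hmk : Function.Surjective H.connectedComponentMk := fun c => c.exists_rep
  rw [← Fintype.card_piFinset, numConstOn, ← card_image_of_injective _
    (hmk.injective_comp_right (γ := ℕ))]
  congr 1
  ext f
  simp only [mem_filter, Fintype.mem_piFinset, mem_image]
  constructor
  · rintro ⟨hf, hA⟩
    have hconst : ∀ x y, H.Reachable x y → f x = f y := by
      rintro x y ⟨p⟩
      exact p.apply_eq_of_forall_isDiag_map fun e he =>
        hA e (mem_of_mem_edgeSet_spanningGraph (p.edges_subset_edgeSet he))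
    refine ⟨ConnectedComponent.lift f fun x y p _ => hconst x y p.reachable, fun c => ?_, rfl⟩
    induction c using ConnectedComponent.ind with | h x => ?_
    refine (mem_commonColors (ConnectedComponent.nonempty_supp _)).mpr fun w hw => ?_
    rw [ConnectedComponent.lift_mk, hconst x w (ConnectedComponent.exact hw.symm)]
    exact hf w
  · rintro ⟨g, hg, rfl⟩
    refine ⟨fun v => commonColors_subset ConnectedComponent.connectedComponentMk_mem (hg _),
      fun e he => ?_⟩
    induction e using Sym2.ind with | _ a b => ?_
    rw [Sym2.map_mk, Sym2.mk_isDiag_iff]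
    by_cases hab : a = b
    · rw [hab]
    · exact congrArg g (ConnectedComponent.sound (spanningGraph_adj.mpr ⟨he, hab⟩).reachable)

end CommonColors

section ForestComponents

variable [Fintype V] {L : V → Finset ℕ} {k : ℕ}

omit [Fintype V] in
theorem reachable_spanningGraph_empty {u v : V} :
    (spanningGraph (∅ : Finset (Sym2 V))).Reachable u v ↔ u = v := by
  rw [spanningGraph_empty, reachable_bot]

open scoped Classical in
theorem card_connectedComponent_spanningGraph_empty [DecidableEq V] :
    Fintype.card (spanningGraph (∅ : Finset (Sym2 V))).ConnectedComponent = Fintype.card V :=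
  (Fintype.card_congr (Equiv.ofBijective _ ⟨fun _ _ h =>
    reachable_spanningGraph_empty.mp (ConnectedComponent.exact h), fun c => c.exists_rep⟩)).symm

omit [Fintype V] in
theorem supp_connectedComponentMk_spanningGraph_empty (v : V) :
    ((spanningGraph (∅ : Finset (Sym2 V))).connectedComponentMk v).supp = {v} := by
  ext w
  simp [reachable_spanningGraph_empty]

open scoped Classical in
theorem sum_sub_card_commonColors_sup_edge_le [DecidableEq V] {H H' : SimpleGraph V} {u v : V}
    (hL : ∀ v, #(L v) = k) (hH' : H' = H ⊔ edge u v) (huv : ¬H.Reachable u v) :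
    ∑ c : H'.ConnectedComponent, ((k : ℤ) - #(commonColors L c.supp)) ≤
      ∑ c : H.ConnectedComponent, ((k : ℤ) - #(commonColors L c.supp)) + alphaL L s(u, v) := by
  have key := sum_supp_sup_edge (fun S => (k : ℤ) - #(commonColors L S)) hH' huv
  beta_reduce at key
  have hsupp : (H'.connectedComponentMk u).supp =
      (H.connectedComponentMk u).supp ∪ (H.connectedComponentMk v).supp :=
    hH' ▸ supp_sup_edge_connectedComponentMk_left
  rw [hsupp, commonColors_union] at key
  set Ku := commonColors L (H.connectedComponentMk u).supp
  set Kv := commonColors L (H.connectedComponentMk v).supp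
  have hunion : #(Ku ∪ Kv) ≤ k + alphaL L s(u, v) :=
    card_union_eq_add_alphaL hL u v ▸ card_le_card (union_subset_union
      (commonColors_subset ConnectedComponent.connectedComponentMk_mem)
      (commonColors_subset ConnectedComponent.connectedComponentMk_mem))
  have := card_union_add_card_inter Ku Kv
  omega

omit [Fintype V] in
theorem isAcyclic_spanningGraph_insert_iff [DecidableEq V] {A : Finset (Sym2 V)} {u v : V}
    (huv : u ≠ v) (he : s(u, v) ∉ A) :
    (spanningGraph (insert s(u, v) A)).IsAcyclic ↔
      (spanningGraph A).IsAcyclic ∧ ¬(spanningGraph A).Reachable u v := by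
  rw [spanningGraph_insert, isAcyclic_sup_fromEdgeSet_iff]
  refine and_congr_right fun _ => ⟨fun h hr => ?_, fun h hr => (h hr).elim⟩
  exact (h hr).elim huv fun hadj => he (spanningGraph_adj.mp hadj).1

open scoped Classical in
theorem card_connectedComponent_add_card_of_isAcyclic [DecidableEq V] {A : Finset (Sym2 V)}
    (hA : ∀ e ∈ A, ¬e.IsDiag) (hacyc : (spanningGraph A).IsAcyclic) :
    Fintype.card (spanningGraph A).ConnectedComponent + #A = Fintype.card V := by
  induction A using Finset.induction_on with
  | empty =>
    rw [card_connectedComponent_spanningGraph_empty, card_empty, add_zero]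
  | insert e A he ih =>
    induction e using Sym2.ind with | _ u v => ?_
    have huv : u ≠ v := fun h => hA _ (mem_insert_self _ _) (Sym2.mk_isDiag_iff.mpr h)
    obtain ⟨hacyc, hnr⟩ := (isAcyclic_spanningGraph_insert_iff huv he).mp hacyc
    have key := sum_supp_sup_edge (fun _ => (1 : ℕ)) (spanningGraph_insert u v) hnr
    simp only [sum_const, card_univ, smul_eq_mul, mul_one] at key
    have := ih (fun e he => hA e (mem_insert_of_mem he)) hacyc
    rw [card_insert_of_notMem he]
    omega

open scoped Classical in
theorem sum_sub_card_commonColors_le_sum_alphaL [DecidableEq V] (hL : ∀ v, #(L v) = k)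
    {A : Finset (Sym2 V)} (hA : ∀ e ∈ A, ¬e.IsDiag)
    (hacyc : (spanningGraph A).IsAcyclic) :
    ∑ c : (spanningGraph A).ConnectedComponent,
      ((k : ℤ) - #(commonColors L c.supp)) ≤ ∑ e ∈ A, (alphaL L e : ℤ) := by
  induction A using Finset.induction_on with
  | empty =>
    refine (sum_eq_zero fun c _ => ?_).le
    induction c using ConnectedComponent.ind with | h v => ?_
    simp [supp_connectedComponentMk_spanningGraph_empty, commonColors_singleton, hL]
  | insert e A he ih =>
    induction e using Sym2.ind with | _ u v => ?_
    have huv : u ≠ v := fun h => hA _ (mem_insert_self _ _) (Sym2.mk_isDiag_iff.mpr h)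
    obtain ⟨hacyc, hnr⟩ := (isAcyclic_spanningGraph_insert_iff huv he).mp hacyc
    rw [sum_insert he]
    linarith [sum_sub_card_commonColors_sup_edge_le hL (spanningGraph_insert u v) hnr,
      ih (fun e he => hA e (mem_insert_of_mem he)) hacyc]

end ForestComponents

theorem mul_pow_card_sub_prod_le {ι R : Type*} [CommRing R] [LinearOrder R] [IsStrictOrderedRing R]
    (s : Finset ι) {k : R} (β : ι → R) (h0 : ∀ i ∈ s, 0 ≤ β i) (hk : ∀ i ∈ s, β i ≤ k) :
    k * (k ^ #s - ∏ i ∈ s, β i) ≤ k ^ #s * ∑ i ∈ s, (k - β i) := by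
  classical
  induction s using Finset.induction_on with
  | empty => simp
  | insert a s ha ih =>
    have h0' : ∀ i ∈ s, 0 ≤ β i := fun i hi => h0 i (mem_insert_of_mem hi)
    have hk' : ∀ i ∈ s, β i ≤ k := fun i hi => hk i (mem_insert_of_mem hi)
    have hk0 : 0 ≤ k := (h0 a (mem_insert_self a s)).trans (hk a (mem_insert_self a s))
    have hka : 0 ≤ k - β a := sub_nonneg.mpr (hk a (mem_insert_self a s))
    have hP : ∏ i ∈ s, β i ≤ k ^ #s :=
      (prod_le_prod h0' hk').trans_eq (prod_const k)
    rw [card_insert_of_notMem ha, prod_insert ha, sum_insert ha, pow_succ]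
    nlinarith [mul_le_mul_of_nonneg_left (ih h0' hk') hk0,
      mul_le_mul_of_nonneg_left hP (mul_nonneg hk0 hka)]

section Bounds

variable [Fintype V] [DecidableEq V] {L : V → Finset ℕ} {k : ℕ}

open scoped Classical in
theorem numConstOn_const (k : ℕ) (A : Finset (Sym2 V)) :
    numConstOn (fun _ => Icc 1 k) A = k ^ Fintype.card (spanningGraph A).ConnectedComponent := by
  rw [numConstOn_eq_prod, ← card_univ, ← prod_const]
  refine prod_congr rfl fun c _ => ?_
  rw [commonColors_const c.nonempty_supp, Nat.card_Icc, Nat.add_sub_cancel]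

open scoped Classical in
theorem mul_pow_sub_numConstOn_le (hL : ∀ v, #(L v) = k) {A : Finset (Sym2 V)}
    (hA : ∀ e ∈ A, ¬e.IsDiag) (hacyc : (spanningGraph A).IsAcyclic) :
    (k : ℤ) * (k ^ Fintype.card (spanningGraph A).ConnectedComponent - numConstOn L A) ≤
      k ^ Fintype.card (spanningGraph A).ConnectedComponent * ∑ e ∈ A, (alphaL L e : ℤ) := by
  have hβ : ∀ c : (spanningGraph A).ConnectedComponent, #(commonColors L c.supp) ≤ k :=
    fun c => card_commonColors_le hL c.out_eq
  calc (k : ℤ) * (k ^ Fintype.card (spanningGraph A).ConnectedComponent - numConstOn L A)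
      ≤ k ^ Fintype.card (spanningGraph A).ConnectedComponent *
          ∑ c : (spanningGraph A).ConnectedComponent, ((k : ℤ) - #(commonColors L c.supp)) := by
        rw [numConstOn_eq_prod, Nat.cast_prod, ← card_univ]
        exact mul_pow_card_sub_prod_le _ _ (fun _ _ => Nat.cast_nonneg _)
          fun c _ => Nat.cast_le.mpr (hβ c)
    _ ≤ _ := mul_le_mul_of_nonneg_left (sum_sub_card_commonColors_le_sum_alphaL hL hA hacyc)
        (by positivity)

open scoped Classical in
theorem alphaL_mul_pow_le (hL : ∀ v, #(L v) = k) {A : Finset (Sym2 V)} {e : Sym2 V}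
    (he : e ∈ A) :
    (alphaL L e : ℤ) * k ^ Fintype.card (spanningGraph A).ConnectedComponent ≤
      k * (k ^ Fintype.card (spanningGraph A).ConnectedComponent - numConstOn L A) := by
  induction e using Sym2.ind with | _ u v => ?_
  set c₀ := (spanningGraph A).connectedComponentMk u
  set n := Fintype.card (spanningGraph A).ConnectedComponent
  have hv : v ∈ c₀.supp := by
    by_cases huv : u = v
    · exact huv ▸ ConnectedComponent.connectedComponentMk_mem
    · exact (ConnectedComponent.sound (spanningGraph_adj.mpr ⟨he, huv⟩).reachable).symm
  have hβ₀ := card_commonColors_add_alphaL_le hL (rfl : u ∈ c₀.supp) hv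
  have hrest : ∏ c ∈ univ.erase c₀, #(commonColors L c.supp) ≤ k ^ (n - 1) :=
    (prod_le_pow_card _ _ _ fun c _ => card_commonColors_le hL c.out_eq).trans_eq
      (by rw [card_erase_of_mem (mem_univ _), card_univ])
  have hn : n = (n - 1) + 1 := (Nat.sub_add_cancel (Fintype.card_pos_iff.mpr ⟨c₀⟩)).symm
  have hprod : k * numConstOn L A ≤ (k - alphaL L s(u, v)) * k ^ n := by
    rw [numConstOn_eq_prod, ← mul_prod_erase _ _ (mem_univ c₀), hn, pow_succ]
    calc k * (#(commonColors L c₀.supp) * ∏ c ∈ univ.erase c₀, #(commonColors L c.supp))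
        ≤ k * ((k - alphaL L s(u, v)) * k ^ (n - 1)) := by
          gcongr
          omega
      _ = _ := by ring
  have hα : alphaL L s(u, v) ≤ k := by omega
  have := (Nat.cast_le (α := ℤ)).mpr hprod
  push_cast [hα] at this
  linarith

end Bounds

section Expansion

variable [Fintype V] [DecidableEq V] {G : SimpleGraph V} [DecidableRel G.Adj] {η : Sym2 V → ℕ}

open scoped Classical in
theorem card_connectedComponent_spanningGraph_add_card (hinj : Set.InjOn η G.edgeSet)
    {A : Finset (Sym2 V)} (hA : A ∈ noBrokenCycleSets G η) :
    Fintype.card (spanningGraph A).ConnectedComponent + #A = Fintype.card V :=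
  card_connectedComponent_add_card_of_isAcyclic
    (fun _ he => G.not_isDiag_of_mem_edgeSet
      (mem_edgeFinset.mp ((mem_noBrokenCycleSets.mp hA).1 he)))
    (isAcyclic_spanningGraph hinj hA)

theorem listCol_sub_propCol_eq_sum (hinj : Set.InjOn η G.edgeSet) (L : V → Finset ℕ) (k : ℕ) :
    (listCol G L : ℤ) - propCol G k = ∑ A ∈ noBrokenCycleSets G η,
      (-1) ^ #A * ((numConstOn L A : ℤ) - k ^ (Fintype.card V - #A)) := by
  classical
  rw [propCol, ← listCol, listCol_eq_sum_noBrokenCycleSets hinj,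
    listCol_eq_sum_noBrokenCycleSets hinj, ← sum_sub_distrib]
  refine sum_congr rfl fun A hA => ?_
  rw [numConstOn_const, ← card_connectedComponent_spanningGraph_add_card hinj hA,
    Nat.add_sub_cancel]
  push_cast
  ring

end Expansion

section Q

variable [Fintype V] [DecidableEq V] {G : SimpleGraph V} [DecidableRel G.Adj] {η : Sym2 V → ℕ}

open scoped Classical in
theorem NBe_eq_card (i : ℕ) (e : Sym2 V) :
    NBe G η i e = #{A ∈ noBrokenCycleSets G η | #A = i ∧ e ∈ A} := by
  rw [NBe, ← Set.ncard_coe_finset]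
  congr 1
  ext A
  simp only [NBset, Set.mem_ofPred_eq, coe_filter, mem_noBrokenCycleSets, ContainsBrokenCycle,
    ← coe_subset, coe_edgeFinset, not_exists, not_and]
  tauto

noncomputable def qCoeff (n : ℕ) (x : ℝ) (i : ℕ) : ℝ :=
  if Odd i then x ^ (n - i) / i else -x ^ (n - i)

omit [DecidableRel G.Adj] in
theorem Qeta_eq_sum (e : Sym2 V) (x : ℝ) :
    Qeta G η e x = ∑ i ∈ Icc 1 (Fintype.card V - 1), NBe G η i e * qCoeff (Fintype.card V) x i := by
  have heven : {i ∈ Icc 2 (Fintype.card V - 1) | Even i} =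
      {i ∈ Icc 1 (Fintype.card V - 1) | Even i} := by
    ext i
    simp only [mem_filter, mem_Icc, Nat.even_iff]
    omega
  rw [Qeta, heven, sum_filter, sum_filter, ← sum_sub_distrib]
  refine sum_congr rfl fun i _ => ?_
  by_cases h : Odd i
  · simp [qCoeff, h, Nat.not_even_iff_odd.mpr h]
    ring
  · simp [qCoeff, h, Nat.not_odd_iff_even.mp h]

theorem sum_alphaL_mul_Qeta (L : V → Finset ℕ) (x : ℝ) :
    ∑ e ∈ G.edgeFinset, (alphaL L e : ℝ) * Qeta G η e x =
      ∑ A ∈ noBrokenCycleSets G η, (∑ e ∈ A, (alphaL L e : ℝ)) *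
        if #A ∈ Icc 1 (Fintype.card V - 1) then qCoeff (Fintype.card V) x #A else 0 := by
  classical
  set n := Fintype.card V
  set w : Finset (Sym2 V) → ℝ := fun A => if #A ∈ Icc 1 (n - 1) then qCoeff n x #A else 0
  calc ∑ e ∈ G.edgeFinset, (alphaL L e : ℝ) * Qeta G η e x
      = ∑ e ∈ G.edgeFinset, ∑ A ∈ noBrokenCycleSets G η,
          if e ∈ A then (alphaL L e : ℝ) * w A else 0 := by
        refine sum_congr rfl fun e _ => ?_
        simp only [Qeta_eq_sum, NBe_eq_card, card_filter, Nat.cast_sum, mul_sum, sum_mul]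
        rw [sum_comm]
        refine sum_congr rfl fun A _ => ?_
        simp only [w, ← sum_ite_eq' (Icc 1 (n - 1)) #A (qCoeff n x), mul_sum]
        split_ifs with he <;> simp [he, n]
    _ = ∑ A ∈ noBrokenCycleSets G η, (∑ e ∈ A, (alphaL L e : ℝ)) * w A := by
        rw [sum_comm]
        refine sum_congr rfl fun A hA => ?_
        rw [sum_ite_mem, inter_eq_right.mpr (mem_noBrokenCycleSets.mp hA).1, sum_mul]

end Q

section Termwise

variable [Fintype V] [DecidableEq V] {G : SimpleGraph V} [DecidableRel G.Adj] {η : Sym2 V → ℕ}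
  {L : V → Finset ℕ} {k : ℕ}

open scoped Classical in
theorem card_mem_Icc_of_mem_noBrokenCycleSets (hinj : Set.InjOn η G.edgeSet)
    {A : Finset (Sym2 V)} (hA : A ∈ noBrokenCycleSets G η) (hne : A.Nonempty) :
    #A ∈ Icc 1 (Fintype.card V - 1) := by
  obtain ⟨e, he⟩ := hne
  induction e using Sym2.ind with | _ u _ => ?_
  have := card_connectedComponent_spanningGraph_add_card hinj hA
  have : 0 < Fintype.card (spanningGraph A).ConnectedComponent :=
    Fintype.card_pos_iff.mpr ⟨(spanningGraph A).connectedComponentMk u⟩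
  exact mem_Icc.mpr ⟨card_pos.mpr ⟨_, he⟩, by omega⟩

open scoped Classical in
theorem one_div_mul_sum_alphaL_mul_qCoeff_le (hinj : Set.InjOn η G.edgeSet)
    (hL : ∀ v, #(L v) = k) (hk : 0 < k) {A : Finset (Sym2 V)} (hA : A ∈ noBrokenCycleSets G η) :
    1 / (k : ℝ) * ((∑ e ∈ A, (alphaL L e : ℝ)) *
      if #A ∈ Icc 1 (Fintype.card V - 1) then qCoeff (Fintype.card V) k #A else 0) ≤
    (-1) ^ #A * ((numConstOn L A : ℝ) - k ^ (Fintype.card V - #A)) := by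
  have hc : Fintype.card V - #A = Fintype.card (spanningGraph A).ConnectedComponent := by
    have := card_connectedComponent_spanningGraph_add_card hinj hA
    omega
  set c := Fintype.card (spanningGraph A).ConnectedComponent
  have hupper : (k : ℝ) * (k ^ c - numConstOn L A) ≤ k ^ c * ∑ e ∈ A, (alphaL L e : ℝ) := by
    exact_mod_cast mul_pow_sub_numConstOn_le hL (fun _ he => G.not_isDiag_of_mem_edgeSet
      (mem_edgeFinset.mp ((mem_noBrokenCycleSets.mp hA).1 he))) (isAcyclic_spanningGraph hinj hA)
  have hlower : (∑ e ∈ A, (alphaL L e : ℝ)) * k ^ c ≤ #A * (k * (k ^ c - numConstOn L A)) := by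
    rw [sum_mul, ← nsmul_eq_mul, ← sum_const]
    exact sum_le_sum fun e he => by exact_mod_cast alphaL_mul_pow_le hL he
  have hkR : (0 : ℝ) < k := by exact_mod_cast hk
  set S := ∑ e ∈ A, (alphaL L e : ℝ)
  set N := (numConstOn L A : ℝ)
  rcases A.eq_empty_or_nonempty with rfl | hne
  · rw [hc]
    simp only [S, sum_empty, zero_mul, mul_zero, card_empty, pow_zero, one_mul] at hupper ⊢
    nlinarith
  have hAR : (0 : ℝ) < #A := by exact_mod_cast hne.card_pos
  rw [if_pos (card_mem_Icc_of_mem_noBrokenCycleSets hinj hA hne), qCoeff, hc]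
  split_ifs with hodd
  · rw [hodd.neg_one_pow, show 1 / (k : ℝ) * (S * (k ^ c / #A)) = S * k ^ c / (#A * k) by
      field_simp, div_le_iff₀ (by positivity)]
    linarith
  · rw [(Nat.not_odd_iff_even.mp hodd).neg_one_pow, show 1 / (k : ℝ) * (S * -k ^ c) =
      -(S * k ^ c) / k by ring, div_le_iff₀ hkR]
    linarith

end Termwise

theorem stmt18_general [Fintype V] [DecidableEq V] (G : SimpleGraph V) [DecidableRel G.Adj]
    (m k : ℕ)
    (η : Sym2 V → ℕ) (hη : Set.BijOn η G.edgeSet (Set.Icc 1 m))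
    (hk : 2 ≤ k) (L : V → Finset ℕ) (hL : ∀ v, (L v).card = k) :
    (listCol G L : ℝ) - (propCol G k : ℝ) ≥
      1 / (k : ℝ) * ∑ e ∈ G.edgeFinset, (alphaL L e : ℝ) * Qeta G η e (k : ℝ) := by
  have hLHS : (listCol G L : ℝ) - propCol G k = ∑ A ∈ noBrokenCycleSets G η,
      (-1) ^ #A * ((numConstOn L A : ℝ) - k ^ (Fintype.card V - #A)) := by
    exact_mod_cast listCol_sub_propCol_eq_sum hη.injOn L k
  rw [ge_iff_le, hLHS, sum_alphaL_mul_Qeta, mul_sum]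
  exact sum_le_sum fun A hA => one_div_mul_sum_alphaL_mul_qCoeff_le hη.injOn hL (by omega) hA

theorem stmt18 [Fintype V] [DecidableEq V] (G : SimpleGraph V) [DecidableRel G.Adj]
    (n m k : ℕ) (hn : n = Fintype.card V) (hm : m = G.edgeFinset.card)
    (η : Sym2 V → ℕ) (hη : Set.BijOn η G.edgeSet (Set.Icc 1 m))
    (hk : 2 ≤ k) (L : V → Finset ℕ) (hL : ∀ v, (L v).card = k) :
    (listCol G L : ℝ) - (propCol G k : ℝ) ≥
      1 / (k : ℝ) * ∑ e ∈ G.edgeFinset, (alphaL L e : ℝ) * Qeta G η e (k : ℝ) :=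
  stmt18_general G m k η hη hk L hL
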